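/- Rank of the rest-state D2Q7 Jacobian: let h̄ > 0, e > 0 and 0 < g < e²/(2h̄), and let A be the 7×7 matrix with A_{0j} = (e² − 2gh̄)/e² for all j and A_{ij} = gh̄/(3e²) + (ξ_i·ξ_j)/(3e²) for i = 1,…,6. Then rank(A) = 3 and rank(A − I₇) = 4. -/
import Mathlib


/-- Dot product on `ℝ × ℝ`. -/
def pdot (a b : ℝ × ℝ) : ℝ := a.1 * b.1 + a.2 * b.2

/-- The D2Q7 lattice velocities with lattice speed `e`. -/
noncomputable def xi7 (e : ℝ) : Fin 7 → ℝ × ℝ :=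
  ![(0, 0), (e, 0), (e / 2, e * Real.sqrt 3 / 2), (-e / 2, e * Real.sqrt 3 / 2),
    (-e, 0), (-e / 2, -(e * Real.sqrt 3 / 2)), (e / 2, -(e * Real.sqrt 3 / 2))]

/-- The Jacobian of the D2Q7 equilibrium distribution at the rest state `(h̄, 0)`. -/
noncomputable def A7 (g e hb : ℝ) : Matrix (Fin 7) (Fin 7) ℝ :=
  Matrix.of fun i j =>
    if i = 0 then (e ^ 2 - 2 * g * hb) / e ^ 2
    else g * hb / (3 * e ^ 2) + pdot (xi7 e i) (xi7 e j) / (3 * e ^ 2)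

open Module Submodule Matrix

section helpers
variable {α : Type*} (a b c d e f g : α)
private lemma v7_0 : ![a,b,c,d,e,f,g] 0 = a := rfl
private lemma v7_1 : ![a,b,c,d,e,f,g] 1 = b := rfl
private lemma v7_2 : ![a,b,c,d,e,f,g] 2 = c := rfl
private lemma v7_3 : ![a,b,c,d,e,f,g] 3 = d := rfl
private lemma v7_4 : ![a,b,c,d,e,f,g] 4 = e := rfl
private lemma v7_5 : ![a,b,c,d,e,f,g] 5 = f := rfl
private lemma v7_6 : ![a,b,c,d,e,f,g] 6 = g := rfl
end helpers

private lemma fin7_ext {f g : Fin 7 → ℝ} (h0 : f 0 = g 0) (h1 : f 1 = g 1) (h2 : f 2 = g 2)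
    (h3 : f 3 = g 3) (h4 : f 4 = g 4) (h5 : f 5 = g 5) (h6 : f 6 = g 6) : f = g := by
  funext i; fin_cases i <;> assumption

private lemma rank_ge_cols {n : ℕ} (M : Matrix (Fin 7) (Fin 7) ℝ) (f : Fin n → Fin 7)
    (h : LinearIndependent ℝ (fun k => M.transpose (f k))) : n ≤ M.rank := by
  rw [Matrix.rank_eq_finrank_span_cols]
  have h1 : finrank ℝ (span ℝ (Set.range (fun k => M.transpose (f k)))) = n := by
    rw [finrank_span_eq_card h, Fintype.card_fin]
  rw [← h1]
  exact Submodule.finrank_mono (span_mono (Set.range_comp_subset_range f M.transpose))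

private lemma ker_ge_vecs {n : ℕ} (M : Matrix (Fin 7) (Fin 7) ℝ) (v : Fin n → (Fin 7 → ℝ))
    (hv : ∀ k, M.mulVec (v k) = 0) (h : LinearIndependent ℝ v) :
    n ≤ finrank ℝ (LinearMap.ker M.mulVecLin) := by
  have hle : span ℝ (Set.range v) ≤ LinearMap.ker M.mulVecLin := by
    rw [span_le]
    rintro _ ⟨k, rfl⟩
    simpa [LinearMap.mem_ker, Matrix.mulVecLin_apply] using hv k
  have h1 : finrank ℝ (span ℝ (Set.range v)) = n := by
    rw [finrank_span_eq_card h, Fintype.card_fin]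
  rw [← h1]
  exact Submodule.finrank_mono hle

private lemma A7_factor (g e hb : ℝ) :
    A7 g e hb =
      (Matrix.of fun i (k : Fin 3) =>
        if k = 0 then (if i = 0 then (e ^ 2 - 2 * g * hb) / e ^ 2 else g * hb / (3 * e ^ 2))
        else if k = 1 then (xi7 e i).1 / (3 * e ^ 2) else (xi7 e i).2 / (3 * e ^ 2)) *
      (Matrix.of fun (k : Fin 3) j =>
        if k = 0 then 1 else if k = 1 then (xi7 e j).1 else (xi7 e j).2) := by
  ext i j
  rw [Matrix.mul_apply, Fin.sum_univ_three]
  by_cases hi : i = 0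
  · subst hi; simp [A7, xi7, pdot]
  · simp only [Matrix.of_apply, A7, if_neg hi, pdot,
      show ((0:Fin 3) = 0) = True by simp, show ((1:Fin 3) = 0) = False by decide,
      show ((2:Fin 3) = 0) = False by decide, show ((1:Fin 3) = 1) = True by simp,
      show ((2:Fin 3) = 1) = False by decide, if_true, if_false]
    ring

set_option maxHeartbeats 2000000 in
theorem d2q7_rank (hb e g : ℝ) (hhb : 0 < hb) (he : 0 < e)
    (hg0 : 0 < g) (hg : g < e ^ 2 / (2 * hb)) :
    (A7 g e hb).rank = 3 ∧ (A7 g e hb - 1).rank = 4 := by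
  have he2 : (e:ℝ)^2 ≠ 0 := pow_ne_zero _ he.ne'
  have hcpos : 0 < (e ^ 2 - 2 * g * hb) / e ^ 2 := by
    apply div_pos _ (by positivity)
    have := (lt_div_iff₀ (by positivity : (0:ℝ) < 2 * hb)).mp hg
    nlinarith
  have hapos : 0 < g * hb / (3 * e ^ 2) := by positivity
  have h3' : Real.sqrt 3 ^ 2 = 3 := Real.sq_sqrt (by norm_num)
  constructor
  · -- rank A7 = 3
    refine le_antisymm ?_ ?_
    · rw [A7_factor g e hb]
      exact le_trans (Matrix.rank_mul_le_right _ _)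
        (by simpa using Matrix.rank_le_card_height (m := Fin 3) _)
    · refine rank_ge_cols _ ![0, 1, 2] ?_
      rw [Fintype.linearIndependent_iff]
      intro w hw
      have e0 := congrFun hw 0
      have e1 := congrFun hw 1
      have e2 := congrFun hw 2
      simp only [Fin.sum_univ_three, A7, xi7, pdot, Matrix.transpose_apply, Matrix.of_apply,
        Pi.add_apply, Pi.smul_apply, smul_eq_mul, Matrix.cons_val_zero, Matrix.cons_val_one,
        Matrix.head_cons, Pi.zero_apply, Matrix.cons_val_two, Matrix.tail_cons,
        show ((1:Fin 7) = 0) = False by decide, show ((2:Fin 7) = 0) = False by decide,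
        if_true, if_false, eq_self_iff_true] at e0 e1 e2
      norm_num at e0 e1 e2
      ring_nf at e2
      simp only [h3'] at e2
      have hs : w 0 + w 1 + w 2 = 0 := by
        have h := mul_eq_zero.mp (show (w 0 + w 1 + w 2) * ((e ^ 2 - 2 * g * hb) / e ^ 2) = 0 by
          linear_combination e0)
        exact h.resolve_right hcpos.ne'
      have hw1 : w 1 = 0 := by
        linear_combination (norm := (field_simp; ring1)) 4*e1 - 2*e2 - 2*(g*hb/(3*e^2))*hs
      have hw2 : w 2 = 0 := by
        linear_combination (norm := (field_simp; ring1)) 6*e1 - 6*(g*hb/(3*e^2))*hs - 2*hw1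
      have hw0 : w 0 = 0 := by linear_combination hs - hw1 - hw2
      intro i; fin_cases i <;> assumption
  · -- rank (A7 - 1) = 4
    have hrn := LinearMap.finrank_range_add_finrank_ker ((A7 g e hb - 1).mulVecLin)
    have hrank : (A7 g e hb - 1).rank
        = finrank ℝ (LinearMap.range ((A7 g e hb - 1).mulVecLin)) := rfl
    rw [Module.finrank_fin_fun] at hrn
    have hker : 3 ≤ finrank ℝ (LinearMap.ker ((A7 g e hb - 1).mulVecLin)) := by
      refine ker_ge_vecs _
        ![![((e ^ 2 - 2 * g * hb) / e ^ 2), (g * hb / (3 * e ^ 2)), (g * hb / (3 * e ^ 2)),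
            (g * hb / (3 * e ^ 2)), (g * hb / (3 * e ^ 2)), (g * hb / (3 * e ^ 2)),
            (g * hb / (3 * e ^ 2))],
          ![0, e, e / 2, -(e / 2), -e, -(e / 2), e / 2],
          ![0, 0, 1, 1, 0, -1, -1]] ?_ ?_
      · have key : ∀ v : Fin 7 → ℝ, (A7 g e hb).mulVec v = v →
            (A7 g e hb - 1).mulVec v = 0 := by
          intro v hv
          rw [Matrix.sub_mulVec, Matrix.one_mulVec, sub_eq_zero, hv]
        have hv1 : (A7 g e hb).mulVec
            ![((e ^ 2 - 2 * g * hb) / e ^ 2), (g * hb / (3 * e ^ 2)), (g * hb / (3 * e ^ 2)),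
              (g * hb / (3 * e ^ 2)), (g * hb / (3 * e ^ 2)), (g * hb / (3 * e ^ 2)),
              (g * hb / (3 * e ^ 2))] =
            ![((e ^ 2 - 2 * g * hb) / e ^ 2), (g * hb / (3 * e ^ 2)), (g * hb / (3 * e ^ 2)),
              (g * hb / (3 * e ^ 2)), (g * hb / (3 * e ^ 2)), (g * hb / (3 * e ^ 2)),
              (g * hb / (3 * e ^ 2))] := by
          apply fin7_ext <;>
          · rw [Matrix.mulVec, dotProduct, Fin.sum_univ_seven]
            simp only [A7, xi7, Matrix.of_apply, pdot,
              show ((0:Fin 7) = 0) = True by simp, show ((1:Fin 7) = 0) = False by decide,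
              show ((2:Fin 7) = 0) = False by decide, show ((3:Fin 7) = 0) = False by decide,
              show ((4:Fin 7) = 0) = False by decide, show ((5:Fin 7) = 0) = False by decide,
              show ((6:Fin 7) = 0) = False by decide, if_true, if_false, v7_0, v7_1, v7_2, v7_3,
              v7_4, v7_5, v7_6]
            ring_nf
            try simp only [h3']
            try field_simp
            try ring
        have hv2 : (A7 g e hb).mulVec ![0, e, e / 2, -(e / 2), -e, -(e / 2), e / 2] =
            ![0, e, e / 2, -(e / 2), -e, -(e / 2), e / 2] := by
          apply fin7_ext <;>
          · rw [Matrix.mulVec, dotProduct, Fin.sum_univ_seven]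
            simp only [A7, xi7, Matrix.of_apply, pdot,
              show ((0:Fin 7) = 0) = True by simp, show ((1:Fin 7) = 0) = False by decide,
              show ((2:Fin 7) = 0) = False by decide, show ((3:Fin 7) = 0) = False by decide,
              show ((4:Fin 7) = 0) = False by decide, show ((5:Fin 7) = 0) = False by decide,
              show ((6:Fin 7) = 0) = False by decide, if_true, if_false, v7_0, v7_1, v7_2, v7_3,
              v7_4, v7_5, v7_6]
            ring_nf
            try simp only [h3']
            try field_simp
            try ring
        have hv3 : (A7 g e hb).mulVec ![0, 0, 1, 1, 0, -1, -1] = ![0, 0, 1, 1, 0, -1, -1] := by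
          apply fin7_ext <;>
          · rw [Matrix.mulVec, dotProduct, Fin.sum_univ_seven]
            simp only [A7, xi7, Matrix.of_apply, pdot,
              show ((0:Fin 7) = 0) = True by simp, show ((1:Fin 7) = 0) = False by decide,
              show ((2:Fin 7) = 0) = False by decide, show ((3:Fin 7) = 0) = False by decide,
              show ((4:Fin 7) = 0) = False by decide, show ((5:Fin 7) = 0) = False by decide,
              show ((6:Fin 7) = 0) = False by decide, if_true, if_false, v7_0, v7_1, v7_2, v7_3,
              v7_4, v7_5, v7_6]
            ring_nf
            try simp only [h3']
            try field_simp
            try ring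
        intro k
        fin_cases k
        · exact key _ hv1
        · exact key _ hv2
        · exact key _ hv3
      · rw [Fintype.linearIndependent_iff]
        intro w hw
        have e0 := congrFun hw 0
        have e1 := congrFun hw 1
        have e2 := congrFun hw 2
        simp only [Fin.sum_univ_three, Pi.add_apply, Pi.smul_apply, smul_eq_mul, Pi.zero_apply,
          Matrix.cons_val_zero, Matrix.cons_val_one, Matrix.head_cons, Matrix.cons_val_two,
          Matrix.tail_cons, v7_0, v7_1, v7_2] at e0 e1 e2
        have hw0 : w 0 = 0 := by
          have h := mul_eq_zero.mp (show w 0 * ((e ^ 2 - 2 * g * hb) / e ^ 2) = 0 by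
            linear_combination e0)
          exact h.resolve_right hcpos.ne'
        have hw1 : w 1 = 0 := by
          have h := mul_eq_zero.mp (show w 1 * e = 0 by
            linear_combination e1 - (g * hb / (3 * e ^ 2)) * hw0)
          exact h.resolve_right he.ne'
        have hw2 : w 2 = 0 := by
          linear_combination e2 - (g * hb / (3 * e ^ 2)) * hw0 - (e / 2) * hw1
        intro i; fin_cases i <;> assumption
    have hcols : 4 ≤ (A7 g e hb - 1).rank := by
      refine rank_ge_cols _ ![0, 1, 2, 3] ?_
      rw [Fintype.linearIndependent_iff]
      intro w hw
      have e0 := congrFun hw 0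
      have e1 := congrFun hw 1
      have e2 := congrFun hw 2
      have e3 := congrFun hw 3
      have e4 := congrFun hw 4
      have e5 := congrFun hw 5
      have e6 := congrFun hw 6
      simp only [Fin.sum_univ_four, A7, xi7, pdot, Matrix.transpose_apply, Matrix.sub_apply,
        Matrix.one_apply, Matrix.of_apply, Pi.add_apply, Pi.smul_apply, smul_eq_mul,
        Matrix.cons_val_zero, Matrix.cons_val_one, Matrix.head_cons, Pi.zero_apply,
        Matrix.cons_val_two, Matrix.tail_cons, Matrix.cons_val_three,
        show ((1:Fin 7) = 0) = False by decide, show ((2:Fin 7) = 0) = False by decide,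
        show ((3:Fin 7) = 0) = False by decide, show ((4:Fin 7) = 0) = False by decide,
        show ((5:Fin 7) = 0) = False by decide, show ((6:Fin 7) = 0) = False by decide,
        show ((0:Fin 7) = 1) = False by decide, show ((1:Fin 7) = 1) = True by simp,
        show ((2:Fin 7) = 1) = False by decide, show ((3:Fin 7) = 1) = False by decide,
        show ((4:Fin 7) = 1) = False by decide, show ((5:Fin 7) = 1) = False by decide,
        show ((6:Fin 7) = 1) = False by decide,
        show ((0:Fin 7) = 2) = False by decide, show ((1:Fin 7) = 2) = False by decide,
        show ((2:Fin 7) = 2) = True by simp, show ((3:Fin 7) = 2) = False by decide,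
        show ((4:Fin 7) = 2) = False by decide, show ((5:Fin 7) = 2) = False by decide,
        show ((6:Fin 7) = 2) = False by decide,
        show ((0:Fin 7) = 3) = False by decide, show ((1:Fin 7) = 3) = False by decide,
        show ((2:Fin 7) = 3) = False by decide, show ((3:Fin 7) = 3) = True by simp,
        show ((4:Fin 7) = 3) = False by decide, show ((5:Fin 7) = 3) = False by decide,
        show ((6:Fin 7) = 3) = False by decide,
        show ((0:Fin 7) = 0) = True by simp,
        v7_0, v7_1, v7_2, v7_3, v7_4, v7_5, v7_6,
        if_true, if_false] at e0 e1 e2 e3 e4 e5 e6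
      norm_num at e0 e1 e2 e3 e4 e5 e6
      ring_nf at e2 e3 e5 e6
      simp only [h3'] at e2 e3 e5 e6
      have h1 : w 1 = 2*(g*hb/(3*e^2))*(w 0 + w 1 + w 2 + w 3) := by
        linear_combination (norm := (field_simp; ring1)) -e1 - e4
      have h2 : w 2 = 2*(g*hb/(3*e^2))*(w 0 + w 1 + w 2 + w 3) := by
        linear_combination (norm := (field_simp; ring1)) -e2 - e5
      have h3w : w 3 = 2*(g*hb/(3*e^2))*(w 0 + w 1 + w 2 + w 3) := by
        linear_combination (norm := (field_simp; ring1)) -e3 - e6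
      have hu : (g*hb/(3*e^2))*(w 0 + w 1 + w 2 + w 3) = 0 := by
        linear_combination (norm := (field_simp; ring1)) -3*e1 - 2*h1 + (1/2)*h2 - (1/2)*h3w
      have hs : w 0 + w 1 + w 2 + w 3 = 0 :=
        (mul_eq_zero.mp hu).resolve_left hapos.ne'
      have hw1 : w 1 = 0 := by linear_combination h1 + 2*(g*hb/(3*e^2))*hs
      have hw2 : w 2 = 0 := by linear_combination h2 + 2*(g*hb/(3*e^2))*hs
      have hw3 : w 3 = 0 := by linear_combination h3w + 2*(g*hb/(3*e^2))*hs
      have hw0 : w 0 = 0 := by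
        linear_combination -e0 + ((e^2 - 2*g*hb)/e^2)*hs
      intro i; fin_cases i <;> assumption
    omega
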